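/- arXiv:2008.03386 — 3 statements merged into one kernel-verified Lean document; each statement's English description precedes it below -/
import Mathlib

section
/- Let κ be an infinite cardinal with the tree property. Then every epimorphism of inverse systems of small abelian groups onto the constant system ℤ splits: for every inverse system (Q_ξ, q_{ηξ})_{η≤ξ<κ} of abelian groups over κ with |Q_ξ| < κ for all ξ < κ, and every family of surjective group homomorphisms e_ξ : Q_ξ → ℤ satisfying e_η ∘ q_{ηξ} = e_ξ for all η ≤ ξ < κ, there exists a family of group homomorphisms s_ξ : ℤ → Q_ξ with q_{ηξ} ∘ s_ξ = s_η and e_ξ ∘ s_ξ = id_ℤ for all η ≤ ξ < κ. -/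
noncomputable section

/-- A relation `lt` on `T` is tree-like when the set of predecessors of every node is
well-ordered by `lt`. -/
def PredWO {T : Type} (lt : T → T → Prop) : Prop :=
  ∀ t : T, IsWellOrder {s : T // lt s t} fun a b => lt a.1 b.1

/-- The height of a node: the order type of its set of predecessors. -/
def nodeHt {T : Type} {lt : T → T → Prop} (h : PredWO lt) (t : T) : Ordinal :=
  @Ordinal.type {s : T // lt s t} (fun a b => lt a.1 b.1) (h t)

/-- `(T, lt)` is a `κ`-tree: a tree (a strict partial order with well-ordered sets of
predecessors) of height `κ` all of whose levels have cardinality `< κ`. -/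
def IsKappaTree (κ : Cardinal) {T : Type} (lt : T → T → Prop) (h : PredWO lt) : Prop :=
  IsStrictOrder T lt ∧
  (∀ t : T, nodeHt h t < κ.ord) ∧
  (∀ o : Ordinal, o < κ.ord → ∃ t : T, nodeHt h t = o) ∧
  (∀ o : Ordinal, Cardinal.mk {t : T // nodeHt h t = o} < κ)

/-- The tree has a cofinal branch: a maximal chain containing nodes of every height
below `κ`. -/
def HasCofinalBranch (κ : Cardinal) {T : Type} (lt : T → T → Prop) (h : PredWO lt) : Prop :=
  ∃ b : Set T, IsMaxChain lt b ∧ ∀ o : Ordinal, o < κ.ord → ∃ t ∈ b, nodeHt h t = o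

/-- `κ` has the tree property: every `κ`-tree has a cofinal branch
(no `κ`-Aronszajn trees). -/
def TreeProp (κ : Cardinal) : Prop :=
  ∀ (T : Type) (lt : T → T → Prop) (h : PredWO lt),
    IsKappaTree κ lt h → HasCofinalBranch κ lt h

/-- An inverse system of abelian groups over the ordinal `ε`. -/
structure InvSys (ε : Ordinal) where
  G : Set.Iio ε → Type
  [grp : ∀ α, AddCommGroup (G α)]
  map : ∀ {α β : Set.Iio ε}, α ≤ β → G β →+ G α
  map_id : ∀ α : Set.Iio ε, map (le_refl α) = AddMonoidHom.id (G α)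
  map_comp : ∀ {α β γ : Set.Iio ε} (h₁ : α ≤ β) (h₂ : β ≤ γ) (x : G γ),
    map h₁ (map h₂ x) = map (h₁.trans h₂) x

attribute [instance] InvSys.grp

/-! Over a well-ordered index set, the pairs `(i, x)` with `x ∈ S i`, ordered by restriction
along the system maps, form a tree in which `(i, x)` has height `typein i`. With `S ξ` the
fibre of `e ξ` over `1` this is a `κ`-tree, since the groups have size `< κ`; a cofinal branch
is a compatible family `x ξ` with `e ξ (x ξ) = 1`, and `s ξ m := m • x ξ` splits `e`. -/

open Cardinal Ordinal

section SigmaTree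

variable {ι : Type} [LinearOrder ι] {S : ι → Type}
  (f : ∀ ⦃i j : ι⦄, i ≤ j → S j → S i)

def sigmaLt (a b : Σ i, S i) : Prop := ∃ h : a.1 < b.1, f h.le b.2 = a.2

variable {f}
variable (hf : ∀ ⦃i j k : ι⦄ (hij : i ≤ j) (hjk : j ≤ k) (x : S k),
  f hij (f hjk x) = f (hij.trans hjk) x)
include hf

theorem isStrictOrder_sigmaLt : IsStrictOrder (Σ i, S i) (sigmaLt f) where
  irrefl _ h := lt_irrefl _ h.1
  trans := by
    rintro ⟨i, x⟩ ⟨j, y⟩ ⟨k, z⟩ ⟨hij, hx⟩ ⟨hjk, hy⟩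
    exact ⟨hij.trans hjk, (hf hij.le hjk.le z).symm.trans ((congrArg _ hy).trans hx)⟩

variable [WellFoundedLT ι]

def sigmaLtPredIso (t : Σ i, S i) :
    (fun a b : {s // sigmaLt f s t} => sigmaLt f a.1 b.1) ≃r
      ((· < ·) : Set.Iio t.1 → Set.Iio t.1 → Prop) where
  toFun s := ⟨s.1.1, s.2.1⟩
  invFun i := ⟨⟨i.1, f (le_of_lt i.2) t.2⟩, i.2, rfl⟩
  left_inv := by
    rintro ⟨⟨i, x⟩, hi, hx⟩
    exact Subtype.ext (Sigma.ext rfl (heq_of_eq hx))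
  right_inv _ := rfl
  map_rel_iff' := by
    rintro ⟨⟨i, x⟩, hi, hx⟩ ⟨⟨j, y⟩, hj, hy⟩
    refine ⟨fun hij => ⟨hij, ?_⟩, fun h => h.1⟩
    exact (congrArg _ hy).symm.trans ((hf hij.le hj.le t.2).trans hx)

theorem predWO_sigmaLt : PredWO (sigmaLt f) := fun t =>
  (sigmaLtPredIso hf t).toRelEmbedding.isWellOrder

theorem nodeHt_sigmaLt (t : Σ i, S i) :
    nodeHt (predWO_sigmaLt hf) t = typein (α := ι) (· < ·) t.1 :=
  letI := predWO_sigmaLt hf t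
  (sigmaLtPredIso hf t).ordinalType_congr

theorem isKappaTree_sigmaLt {κ : Cardinal} [Nonempty ι] (hι : typeLT ι = κ.ord)
    (hne : ∀ i, Nonempty (S i)) (hsmall : ∀ i, #(S i) < κ) :
    IsKappaTree κ (sigmaLt f) (predWO_sigmaLt hf) := by
  refine ⟨isStrictOrder_sigmaLt hf, fun t => ?_, fun o ho => ?_, fun o => ?_⟩
  · rw [nodeHt_sigmaLt hf, ← hι]
    exact typein_lt_type _ _
  · obtain ⟨i, rfl⟩ := typein_surj (α := ι) (· < ·) (hι ▸ ho)
    exact ⟨⟨i, (hne i).some⟩, nodeHt_sigmaLt hf _⟩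
  · by_cases ho : ∃ i : ι, typein (α := ι) (· < ·) i = o
    · obtain ⟨i, rfl⟩ := ho
      calc #{t // nodeHt (predWO_sigmaLt hf) t = typein (α := ι) (· < ·) i}
          ≤ #{t : Σ j, S j // t.1 = i} := mk_subtype_mono fun t ht =>
            typein_injective (α := ι) (· < ·) ((nodeHt_sigmaLt hf t).symm.trans ht)
        _ = #(S i) := mk_congr (Equiv.sigmaSubtype i)
        _ < κ := hsmall i
    · have : IsEmpty {t // nodeHt (predWO_sigmaLt hf) t = o} :=
        ⟨fun t => ho ⟨t.1.1, (nodeHt_sigmaLt hf t.1).symm.trans t.2⟩⟩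
      rw [mk_eq_zero]
      exact zero_le.trans_lt (hsmall (Classical.arbitrary ι))

theorem TreeProp.exists_thread_of_wellOrder {κ : Cardinal} (htp : TreeProp κ)
    (hι : typeLT ι = κ.ord) (hne : ∀ i, Nonempty (S i)) (hsmall : ∀ i, #(S i) < κ) :
    ∃ x : ∀ i, S i, ∀ ⦃i j⦄ (h : i < j), f h.le (x j) = x i := by
  rcases isEmpty_or_nonempty ι with _ | _
  · exact ⟨isEmptyElim, fun i => isEmptyElim i⟩
  obtain ⟨b, hb, hcof⟩ := htp _ _ _ (isKappaTree_sigmaLt hf hι hne hsmall)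
  have hmem (i : ι) : ∃ x, (⟨i, x⟩ : Σ i, S i) ∈ b := by
    obtain ⟨⟨j, x⟩, hx, hj⟩ := hcof (typein (α := ι) (· < ·) i) (hι ▸ typein_lt_type _ _)
    obtain rfl : j = i := typein_injective (α := ι) _ ((nodeHt_sigmaLt hf _).symm.trans hj)
    exact ⟨x, hx⟩
  choose x hx using hmem
  refine ⟨x, fun i j hij => ?_⟩
  rcases hb.1 (hx i) (hx j) (fun h => hij.ne (congrArg Sigma.fst h)) with h | h
  · exact h.2
  · exact absurd h.1 hij.not_gt

end SigmaTree

theorem TreeProp.exists_thread {κ : Cardinal} (htp : TreeProp κ) {S : Set.Iio κ.ord → Type}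
    {f : ∀ ⦃η ξ⦄, η ≤ ξ → S ξ → S η}
    (hf : ∀ ⦃η ξ ζ⦄ (hηξ : η ≤ ξ) (hξζ : ξ ≤ ζ) (x : S ζ), f hηξ (f hξζ x) = f (hηξ.trans hξζ) x)
    (hne : ∀ ξ, Nonempty (S ξ)) (hsmall : ∀ ξ, #(S ξ) < κ) :
    ∃ x : ∀ ξ, S ξ, ∀ ⦃η ξ⦄ (h : η < ξ), f h.le (x ξ) = x η := by
  -- The tree must live in `Type`, and `Set.Iio κ.ord` does not; `φ.symm (φ ξ)` is `ξ` only
  -- propositionally, whence the transport along `f` below.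
  let φ : Set.Iio κ.ord ≃o κ.ord.ToType := ToType.mk
  obtain ⟨y, hy⟩ := htp.exists_thread_of_wellOrder
    (S := fun i => S (φ.symm i)) (f := fun i j h => f (φ.symm.monotone h))
    (fun _ _ _ _ _ _ => hf _ _ _) (type_toType _) (fun _ => hne _) (fun _ => hsmall _)
  refine ⟨fun ξ => f (φ.symm_apply_apply ξ).ge (y (φ ξ)), fun η ξ h => ?_⟩
  calc f h.le (f _ (y (φ ξ)))
      = f _ (y (φ ξ)) := hf _ _ _
    _ = f (φ.symm_apply_apply η).ge (f _ (y (φ ξ))) := (hf _ _ _).symm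
    _ = f _ (y (φ η)) := congrArg _ (hy (φ.lt_iff_lt.2 h))

theorem stmt10_general (κ : Cardinal) (htp : TreeProp κ)
    (X : InvSys κ.ord)
    (hsmall : ∀ ξ : Set.Iio κ.ord, Cardinal.mk (X.G ξ) < κ)
    (e : ∀ ξ : Set.Iio κ.ord, X.G ξ →+ ℤ)
    (hsurj : ∀ ξ : Set.Iio κ.ord, Function.Surjective (e ξ))
    (hcomm : ∀ (η ξ : Set.Iio κ.ord) (h : η ≤ ξ) (x : X.G ξ), e η (X.map h x) = e ξ x) :
    ∃ s : ∀ ξ : Set.Iio κ.ord, ℤ →+ X.G ξ,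
      (∀ (η ξ : Set.Iio κ.ord) (h : η ≤ ξ) (m : ℤ), X.map h (s ξ m) = s η m) ∧
      ∀ (ξ : Set.Iio κ.ord) (m : ℤ), e ξ (s ξ m) = m := by
  obtain ⟨x, hx⟩ := htp.exists_thread (S := fun ξ => {x : X.G ξ // e ξ x = 1})
    (f := fun η ξ h x => ⟨X.map h x.1, (hcomm η ξ h x.1).trans x.2⟩)
    (fun _ _ _ _ _ x => Subtype.ext (X.map_comp _ _ x.1))
    (fun ξ => nonempty_subtype.2 (hsurj ξ 1)) (fun ξ => (mk_subtype_le _).trans_lt (hsmall ξ))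
  have hmap (η ξ : Set.Iio κ.ord) (h : η ≤ ξ) : X.map h (x ξ).1 = (x η).1 := by
    rcases h.lt_or_eq with h | rfl
    · exact congrArg Subtype.val (hx h)
    · exact DFunLike.congr_fun (X.map_id η) _
  refine ⟨fun ξ => zmultiplesHom _ (x ξ).1, fun η ξ h m => ?_, fun ξ m => ?_⟩
  · rw [zmultiplesHom_apply, zmultiplesHom_apply, map_zsmul, hmap]
  · rw [zmultiplesHom_apply, map_zsmul, (x ξ).2, _root_.smul_eq_mul, mul_one]

/-- If the infinite cardinal `κ` has the tree property, then every epimorphism of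
inverse systems of size-`< κ` abelian groups over `κ` onto the constant system `ℤ`
splits. -/
theorem stmt10 (κ : Cardinal) (hκ : Cardinal.aleph0 ≤ κ) (htp : TreeProp κ)
    (X : InvSys κ.ord)
    (hsmall : ∀ ξ : Set.Iio κ.ord, Cardinal.mk (X.G ξ) < κ)
    (e : ∀ ξ : Set.Iio κ.ord, X.G ξ →+ ℤ)
    (hsurj : ∀ ξ : Set.Iio κ.ord, Function.Surjective (e ξ))
    (hcomm : ∀ (η ξ : Set.Iio κ.ord) (h : η ≤ ξ) (x : X.G ξ), e η (X.map h x) = e ξ x) :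
    ∃ s : ∀ ξ : Set.Iio κ.ord, ℤ →+ X.G ξ,
      (∀ (η ξ : Set.Iio κ.ord) (h : η ≤ ξ) (m : ℤ), X.map h (s ξ m) = s η m) ∧
      ∀ (ξ : Set.Iio κ.ord) (m : ℤ), e ξ (s ξ m) = m :=
  stmt10_general κ htp X hsmall e hsurj hcomm
end
end

section
/- Let κ be an infinite cardinal carrying a κ-Aronszajn tree. Then there exist an inverse system (Q_ξ, q_{ηξ})_{η≤ξ<κ} of abelian groups over κ, each Q_ξ having a generating set of cardinality less than κ, together with surjective group homomorphisms e_ξ : Q_ξ → ℤ satisfying e_η ∘ q_{ηξ} = e_ξ for all η ≤ ξ < κ, such that there is no family of group homomorphisms s_ξ : ℤ → Q_ξ with q_{ηξ} ∘ s_ξ = s_η and e_ξ ∘ s_ξ = id_ℤ for all η ≤ ξ < κ. -/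
noncomputable section

/-!
The inverse system is `ξ ↦ ℤ[T_ξ]`, the free abelian groups on the levels of the Aronszajn
tree `T`, bonded by the maps sending a node to its predecessor on the lower level, with the
augmentations `ℤ[T_ξ] → ℤ`. A section picks `s_ξ ∈ ℤ[T_ξ]` of augmentation `1`; their supports
are nonempty finite sets, each contained in the projection of every later one. If the sizes of
the supports are bounded they are eventually constant, the projections are then eventually
bijective on the supports, and the support nodes above a fixed support node form a cofinal
branch. If the sizes are unbounded, `κ` has countable cofinality, and extending a support node
along an `ω`-sequence of levels cofinal in `κ` again yields a cofinal branch.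
-/

open Relation

theorem IsChain.of_reflGen {α : Type*} {r : α → α → Prop} {c : Set α}
    (hc : IsChain (ReflGen r) c) : IsChain r c := by
  intro a ha b hb hab
  rcases hc ha hb hab with (_ | hab') | (_ | hba')
  exacts [absurd rfl hab, .inl hab', absurd rfl hab, .inr hba']

namespace PredWO

theorem lt_or_lt_of_reflGen {T : Type} {lt : T → T → Prop} (h : PredWO lt) {t u v : T}
    (hu : ReflGen lt u t) (hv : ReflGen lt v t) (huv : u ≠ v) : lt u v ∨ lt v u := by
  rcases hu with _ | hu <;> rcases hv with _ | hv
  · exact absurd rfl huv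
  · exact .inr hv
  · exact .inl hu
  · have := h t
    rcases trichotomous_of (fun a b : {u // lt u t} => lt a.1 b.1) ⟨u, hu⟩ ⟨v, hv⟩ with
      huv' | huv' | huv'
    · exact .inl huv'
    · exact absurd (congrArg Subtype.val huv') huv
    · exact .inr huv'

section

variable {T : Type} {lt : T → T → Prop} [IsTrans T lt] (h : PredWO lt)

theorem nodeHt_eq_typein {s t : T} (hst : lt s t) :
    nodeHt h s = @Ordinal.typein {u // lt u t} (fun a b => lt a.1 b.1) (h t) ⟨s, hst⟩ := by
  have := h t
  have := h s
  rw [← Ordinal.type_subrel]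
  exact RelIso.ordinalType_congr
    ⟨⟨fun v => ⟨⟨v.1, _root_.trans v.2 hst⟩, v.2⟩, fun v => ⟨v.1.1, v.2⟩,
      fun _ => rfl, fun _ => rfl⟩, Iff.rfl⟩

theorem nodeHt_lt_of_lt {s t : T} (hst : lt s t) : nodeHt h s < nodeHt h t := by
  have := h t
  rw [h.nodeHt_eq_typein hst]
  exact Ordinal.typein_lt_type _ _

theorem exists_reflGen_nodeHt_eq {t : T} {o : Ordinal} (ho : o ≤ nodeHt h t) :
    ∃ u, ReflGen lt u t ∧ nodeHt h u = o := by
  rcases ho.eq_or_lt with rfl | hlt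
  · exact ⟨t, .refl, rfl⟩
  · have := h t
    obtain ⟨u, rfl⟩ := Ordinal.typein_surj (fun a b : {u // lt u t} => lt a.1 b.1) hlt
    exact ⟨u.1, .single u.2, h.nodeHt_eq_typein u.2⟩

theorem eq_of_reflGen_of_nodeHt_eq {t u v : T} (hu : ReflGen lt u t) (hv : ReflGen lt v t)
    (huv : nodeHt h u = nodeHt h v) : u = v := by
  have := h t
  rcases hu with _ | hu <;> rcases hv with _ | hv
  · rfl
  · exact absurd huv (h.nodeHt_lt_of_lt hv).ne'
  · exact absurd huv (h.nodeHt_lt_of_lt hu).ne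
  · rw [h.nodeHt_eq_typein hu, h.nodeHt_eq_typein hv] at huv
    exact congrArg Subtype.val (Ordinal.typein_injective _ huv)

/-- The downward closure of a chain is a chain, and it meets every level below the height of
one of its nodes. -/
theorem hasCofinalBranch_of_isChain (κ : Cardinal) {c : Set T} (hc : IsChain lt c)
    (hcof : ∀ o < κ.ord, ∃ t ∈ c, o ≤ nodeHt h t) : HasCofinalBranch κ lt h := by
  have hdown : IsChain lt {u | ∃ t ∈ c, ReflGen lt u t} := by
    rintro u ⟨t, htc, hut⟩ v ⟨t', htc', hvt'⟩ huv
    rcases eq_or_ne t t' with rfl | htt'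
    · exact h.lt_or_lt_of_reflGen hut hvt' huv
    rcases hc htc htc' htt' with htt' | ht't
    · exact h.lt_or_lt_of_reflGen (_root_.trans hut (.single htt')) hvt' huv
    · exact h.lt_or_lt_of_reflGen hut (_root_.trans hvt' (.single ht't)) huv
  obtain ⟨M, hM, hsub⟩ := hdown.exists_maxChain
  refine ⟨M, hM, fun o ho => ?_⟩
  obtain ⟨t, htc, hot⟩ := hcof o ho
  obtain ⟨u, hut, huo⟩ := h.exists_reflGen_nodeHt_eq hot
  exact ⟨u, hsub ⟨t, htc, hut⟩, huo⟩

abbrev Level (o : Ordinal) : Type := {t : T // nodeHt h t = o}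

def levelProj {o₁ o₂ : Ordinal} (hle : o₁ ≤ o₂) (t : h.Level o₂) : h.Level o₁ :=
  ⟨(h.exists_reflGen_nodeHt_eq (hle.trans_eq t.2.symm)).choose,
    (h.exists_reflGen_nodeHt_eq (hle.trans_eq t.2.symm)).choose_spec.2⟩

theorem reflGen_levelProj {o₁ o₂ : Ordinal} (hle : o₁ ≤ o₂) (t : h.Level o₂) :
    ReflGen lt (h.levelProj hle t).1 t.1 :=
  (h.exists_reflGen_nodeHt_eq (hle.trans_eq t.2.symm)).choose_spec.1

theorem levelProj_eq_of_reflGen {o₁ o₂ : Ordinal} (hle : o₁ ≤ o₂) {t : h.Level o₂}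
    {u : h.Level o₁} (hut : ReflGen lt u.1 t.1) : h.levelProj hle t = u :=
  Subtype.ext <| h.eq_of_reflGen_of_nodeHt_eq (h.reflGen_levelProj hle t) hut
    ((h.levelProj hle t).2.trans u.2.symm)

@[simp]
theorem levelProj_self {o : Ordinal} (t : h.Level o) : h.levelProj le_rfl t = t :=
  h.levelProj_eq_of_reflGen _ .refl

@[simp]
theorem levelProj_levelProj {o₁ o₂ o₃ : Ordinal} (h₁ : o₁ ≤ o₂) (h₂ : o₂ ≤ o₃)
    (t : h.Level o₃) : h.levelProj h₁ (h.levelProj h₂ t) = h.levelProj (h₁.trans h₂) t :=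
  (h.levelProj_eq_of_reflGen _
    (_root_.trans (h.reflGen_levelProj h₁ _) (h.reflGen_levelProj h₂ t))).symm

end

variable {T : Type} {lt : T → T → Prop} [IsTrans T lt] {h : PredWO lt} {κ : Cardinal}

theorem hasCofinalBranch_of_forall_exists_extension {S : Set T} {t₀ : T} (ht₀ : t₀ ∈ S)
    (hS : ∀ t ∈ S, ∀ o < κ.ord, ∃ t' ∈ S, o ≤ nodeHt h t' ∧ ReflGen lt t t')
    (f : ℕ → Ordinal) (hf : ∀ n, f n < κ.ord) (hcof : ∀ o < κ.ord, ∃ n, o ≤ f n) :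
    HasCofinalBranch κ lt h := by
  choose! next hnextS hnext_ht hnext_rel using hS
  let g : ℕ → T := fun n => Nat.rec t₀ (fun n t => next t (f n)) n
  have hgS : ∀ n, g n ∈ S := fun n => Nat.rec ht₀ (fun n ih => hnextS _ ih _ (hf n)) n
  have hstep : ∀ n, ReflGen lt (g n) (g (n + 1)) := fun n => hnext_rel _ (hgS n) _ (hf n)
  refine h.hasCofinalBranch_of_isChain κ (c := Set.range g) (IsChain.of_reflGen ?_) ?_
  · rintro _ ⟨i, rfl⟩ _ ⟨j, rfl⟩ -
    exact (le_total i j).imp (fun hij => Nat.rel_of_forall_rel_succ_of_le _ hstep hij)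
      (fun hji => Nat.rel_of_forall_rel_succ_of_le _ hstep hji)
  · intro o ho
    obtain ⟨n, hn⟩ := hcof o ho
    exact ⟨g (n + 1), ⟨n + 1, rfl⟩, hn.trans (hnext_ht _ (hgS n) _ (hf n))⟩

variable [DecidableEq T] {F : ∀ ξ : Set.Iio κ.ord, Finset (h.Level ξ)}

theorem card_le_card_of_subset_image
    (hF : ∀ {η ξ : Set.Iio κ.ord} (hle : η ≤ ξ), F η ⊆ (F ξ).image (h.levelProj hle))
    {η ξ : Set.Iio κ.ord} (hle : η ≤ ξ) : (F η).card ≤ (F ξ).card :=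
  (Finset.card_le_card (hF hle)).trans Finset.card_image_le

/-- Once the sizes stop growing, the projections are bijections between the sets, so the nodes
of the sets lying above a fixed node of `F ξ₁` form a cofinal chain. -/
theorem hasCofinalBranch_of_forall_card_le
    (hF : ∀ {η ξ : Set.Iio κ.ord} (hle : η ≤ ξ), F η ⊆ (F ξ).image (h.levelProj hle))
    {ξ₁ : Set.Iio κ.ord} (hξ₁ : ∀ ξ, (F ξ).card ≤ (F ξ₁).card) {s : h.Level ξ₁}
    (hs : s ∈ F ξ₁) : HasCofinalBranch κ lt h := by
  have hcard {η ξ : Set.Iio κ.ord} (hη : ξ₁ ≤ η) (hle : η ≤ ξ) :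
      (F ξ).card = (F η).card :=
    le_antisymm ((hξ₁ ξ).trans (card_le_card_of_subset_image hF hη))
      (card_le_card_of_subset_image hF hle)
  have himage {η ξ : Set.Iio κ.ord} (hη : ξ₁ ≤ η) (hle : η ≤ ξ) :
      (F ξ).image (h.levelProj hle) = F η :=
    (Finset.eq_of_subset_of_card_le (hF hle)
      (Finset.card_image_le.trans (hcard hη hle).le)).symm
  have hinj {η ξ : Set.Iio κ.ord} (hη : ξ₁ ≤ η) (hle : η ≤ ξ) :
      Set.InjOn (h.levelProj hle) (F ξ) :=
    Finset.card_image_iff.mp (by rw [himage hη hle, hcard hη hle])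
  have hlift {ξ ξ' : Set.Iio κ.ord} (hξ : ξ₁ ≤ ξ) (hξ' : ξ₁ ≤ ξ') (hle : ξ ≤ ξ')
      {w : h.Level ξ} {w' : h.Level ξ'} (hw : w ∈ F ξ) (hw' : w' ∈ F ξ')
      (hws : h.levelProj hξ w = s) (hws' : h.levelProj hξ' w' = s) :
      ReflGen lt w.1 w'.1 := by
    have hmem : h.levelProj hle w' ∈ F ξ := himage hξ hle ▸ Finset.mem_image_of_mem _ hw'
    have hproj : h.levelProj hle w' = w :=
      hinj le_rfl hξ hmem hw (by rw [levelProj_levelProj, hws', hws])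
    exact hproj ▸ h.reflGen_levelProj hle w'
  refine h.hasCofinalBranch_of_isChain κ (c := {t | ∃ (ξ : Set.Iio κ.ord) (hξ : ξ₁ ≤ ξ)
    (w : h.Level ξ), w ∈ F ξ ∧ h.levelProj hξ w = s ∧ w.1 = t}) (IsChain.of_reflGen ?_) ?_
  · rintro _ ⟨ξ, hξ, w, hw, hws, rfl⟩ _ ⟨ξ', hξ', w', hw', hws', rfl⟩ -
    rcases le_total ξ ξ' with hle | hle
    exacts [.inl (hlift hξ hξ' hle hw hw' hws hws'), .inr (hlift hξ' hξ hle hw' hw hws' hws)]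
  · intro o ho
    have hξ : ξ₁ ≤ ⟨max ξ₁.1 o, max_lt ξ₁.2 ho⟩ := le_max_left ξ₁.1 o
    obtain ⟨w, hw, hws⟩ := Finset.mem_image.mp ((himage le_rfl hξ).symm ▸ hs)
    exact ⟨w.1, ⟨_, hξ, w, hw, hws, rfl⟩, (le_max_right ξ₁.1 o).trans_eq w.2.symm⟩

theorem hasCofinalBranch_of_finsetSystem [Nonempty (Set.Iio κ.ord)]
    (hF : ∀ {η ξ : Set.Iio κ.ord} (hle : η ≤ ξ), F η ⊆ (F ξ).image (h.levelProj hle))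
    (hne : ∀ ξ, (F ξ).Nonempty) : HasCofinalBranch κ lt h := by
  by_cases hbdd : BddAbove (Set.range fun ξ => (F ξ).card)
  · obtain ⟨ξ₁, hξ₁⟩ := Nat.sSup_mem (Set.range_nonempty _) hbdd
    obtain ⟨s, hs⟩ := hne ξ₁
    exact hasCofinalBranch_of_forall_card_le hF
      (fun ξ => (le_csSup hbdd ⟨ξ, rfl⟩).trans_eq hξ₁.symm) hs
  -- the sizes are monotone, so the levels `f n` with `n < #(F (f n))` are cofinal
  rw [not_bddAbove_iff] at hbdd
  choose f hf using fun n : ℕ => Set.exists_range_iff.mp (hbdd n)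
  obtain ⟨w₀, hw₀⟩ := hne (f 0)
  refine hasCofinalBranch_of_forall_exists_extension (S := {t | ∃ ξ, ∃ w ∈ F ξ, w.1 = t})
    ⟨_, w₀, hw₀, rfl⟩ ?_ (fun n => (f n).1) (fun n => (f n).2) fun o ho => ?_
  · rintro _ ⟨ζ, w, hw, rfl⟩ o ho
    have hle : ζ ≤ ⟨max ζ.1 o, max_lt ζ.2 ho⟩ := le_max_left ζ.1 o
    obtain ⟨w', hw', hw'w⟩ := Finset.mem_image.mp (hF hle hw)
    exact ⟨w'.1, ⟨_, w', hw', rfl⟩, (le_max_right ζ.1 o).trans_eq w'.2.symm,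
       hw'w ▸ h.reflGen_levelProj hle w'⟩
  · refine ⟨(F ⟨o, ho⟩).card, not_lt.mp fun hlt => ?_⟩
    exact (hf _).not_ge (card_le_card_of_subset_image hF hlt.le)

end PredWO

theorem Finsupp.addSubgroupClosure_range_single_one (α : Type*) :
    AddSubgroup.closure (Set.range fun a : α => Finsupp.single a (1 : ℤ)) = ⊤ := by
  apply AddSubgroup.toIntSubmodule.injective
  rw [AddSubgroup.toIntSubmodule_closure, ← Finsupp.coe_basisSingleOne,
    Finsupp.basisSingleOne.span_eq, map_top]

namespace InvSys

def free {ε : Ordinal} (L : Set.Iio ε → Type) (p : ∀ {α β : Set.Iio ε}, α ≤ β → L β → L α)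
    (p_self : ∀ α (x : L α), p le_rfl x = x)
    (p_comp : ∀ {α β γ : Set.Iio ε} (h₁ : α ≤ β) (h₂ : β ≤ γ) (x : L γ),
      p h₁ (p h₂ x) = p (h₁.trans h₂) x) : InvSys ε where
  G α := L α →₀ ℤ
  map hle := Finsupp.mapDomain.addMonoidHom (p hle)
  map_id α := by
    ext x
    simp [p_self]
  map_comp h₁ h₂ x := by
    simp [← Finsupp.mapDomain_comp, Function.comp_def, p_comp]

def levels (κ : Cardinal) {T : Type} {lt : T → T → Prop} [IsTrans T lt] (h : PredWO lt) :
    InvSys κ.ord :=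
  free (fun ξ => h.Level ξ) (h.levelProj ·) (fun _ => h.levelProj_self) h.levelProj_levelProj

end InvSys

theorem stmt11_general (κ : Cardinal)
    (hA : ∃ (T : Type) (lt : T → T → Prop) (h : PredWO lt),
      IsKappaTree κ lt h ∧ ¬ HasCofinalBranch κ lt h) :
    ∃ (X : InvSys κ.ord) (e : ∀ ξ : Set.Iio κ.ord, X.G ξ →+ ℤ),
      (∀ ξ : Set.Iio κ.ord, ∃ S : Set (X.G ξ),
        Cardinal.mk S < κ ∧ AddSubgroup.closure S = ⊤) ∧
      (∀ ξ : Set.Iio κ.ord, Function.Surjective (e ξ)) ∧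
      (∀ (η ξ : Set.Iio κ.ord) (h : η ≤ ξ) (x : X.G ξ), e η (X.map h x) = e ξ x) ∧
      ¬ ∃ s : ∀ ξ : Set.Iio κ.ord, ℤ →+ X.G ξ,
          (∀ (η ξ : Set.Iio κ.ord) (h : η ≤ ξ) (m : ℤ), X.map h (s ξ m) = s η m) ∧
          ∀ (ξ : Set.Iio κ.ord) (m : ℤ), e ξ (s ξ m) = m := by
  classical
  obtain ⟨T, lt, h, ⟨hso, -, hlev, hcard⟩, hnb⟩ := hA
  have : Nonempty (Set.Iio κ.ord) := ⟨⟨0, Cardinal.ord_pos.2 (zero_le.trans_lt (hcard 0))⟩⟩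
  refine ⟨InvSys.levels κ h, fun _ => Finsupp.degree, fun ξ => ⟨_,
      Cardinal.mk_range_le.trans_lt (hcard ξ), Finsupp.addSubgroupClosure_range_single_one _⟩,
    fun ξ m => ?_, fun _ _ _ => Finsupp.degree_mapDomain _, ?_⟩
  · obtain ⟨t, ht⟩ := hlev ξ ξ.2
    exact ⟨Finsupp.single ⟨t, ht⟩ m, Finsupp.degree_single _ _⟩
  · rintro ⟨s, hs, hes⟩
    refine hnb (h.hasCofinalBranch_of_finsetSystem (F := fun ξ => (s ξ 1).support)
      (fun hle => hs _ _ hle 1 ▸ Finsupp.mapDomain_support) fun ξ => ?_)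
    refine Finsupp.support_nonempty_iff.2 fun h0 => zero_ne_one (α := ℤ) ?_
    rw [← hes ξ 1, h0]
    exact (map_zero Finsupp.degree).symm

/-- If the infinite cardinal `κ` carries a `κ`-Aronszajn tree, then there is an
inverse system of abelian groups over `κ`, each with a generating set of size `< κ`,
together with an epimorphism onto the constant system `ℤ` admitting no section. -/
theorem stmt11 (κ : Cardinal) (hκ : Cardinal.aleph0 ≤ κ)
    (hA : ∃ (T : Type) (lt : T → T → Prop) (h : PredWO lt),
      IsKappaTree κ lt h ∧ ¬ HasCofinalBranch κ lt h) :
    ∃ (X : InvSys κ.ord) (e : ∀ ξ : Set.Iio κ.ord, X.G ξ →+ ℤ),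
      (∀ ξ : Set.Iio κ.ord, ∃ S : Set (X.G ξ),
        Cardinal.mk S < κ ∧ AddSubgroup.closure S = ⊤) ∧
      (∀ ξ : Set.Iio κ.ord, Function.Surjective (e ξ)) ∧
      (∀ (η ξ : Set.Iio κ.ord) (h : η ≤ ξ) (x : X.G ξ), e η (X.map h x) = e ξ x) ∧
      ¬ ∃ s : ∀ ξ : Set.Iio κ.ord, ℤ →+ X.G ξ,
          (∀ (η ξ : Set.Iio κ.ord) (h : η ≤ ξ) (m : ℤ), X.map h (s ξ m) = s η m) ∧
          ∀ (ξ : Set.Iio κ.ord) (m : ℤ), e ξ (s ξ m) = m :=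
  stmt11_general κ hA
end
end

section
/- For every abelian group A, every positive integer n, and every ordinal ε whose cofinality is less than ℵ_n, every A-valued n-coherent family of height ε is n-trivial. -/
noncomputable section

/-- `[ε]^m`: strictly increasing `m`-tuples of ordinals below `ε`. -/
def Tup (ε : Ordinal) (m : ℕ) : Type 1 :=
  {t : Fin m → Ordinal // StrictMono t ∧ ∀ i, t i < ε}

/-- The least entry of a tuple; by convention the "least entry" of the empty
tuple is `ε` itself (so that functions indexed by the empty tuple have domain
`{ξ : ξ < ε}`). -/
def hd {ε : Ordinal} : {m : ℕ} → Tup ε m → Ordinal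
  | 0, _ => ε
  | _ + 1, t => t.1 0

/-- The tuple obtained by removing the `i`-th entry. -/
def faceT {ε : Ordinal} {m : ℕ} (t : Tup ε (m + 1)) (i : Fin (m + 1)) : Tup ε m :=
  ⟨t.1 ∘ i.succAbove, (t.2.1.comp (Fin.strictMono_succAbove i)), fun j => t.2.2 _⟩

lemma hd_le_faceT {ε : Ordinal} {m : ℕ} (t : Tup ε (m + 1)) (i : Fin (m + 1)) :
    hd t ≤ hd (faceT t i) := by
  cases m with
  | zero => exact (t.2.2 0).le
  | succ m => exact t.2.1.monotone (Fin.zero_le _)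

/-- An `A`-valued `(m+1)`-coherent family of height `ε` (each `φ_β⃗` is a function
`{ξ : ξ < β₀} → A`, and each alternating sum over the faces of an `(m+2)`-tuple is
nonzero at only finitely many points of the common domain). -/
def CohI {A : Type*} [AddCommGroup A] {ε : Ordinal} {m : ℕ}
    (F : (t : Tup ε (m + 1)) → Set.Iio (hd t) → A) : Prop :=
  ∀ s : Tup ε (m + 2),
    {ξ : Set.Iio (hd s) |
      (∑ i : Fin (m + 2), (-1 : ℤ) ^ (i : ℕ) •
        F (faceT s i) ⟨ξ.1, lt_of_lt_of_le ξ.2 (hd_le_faceT s i)⟩) ≠ 0}.Finite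

/-- `(m+1)`-triviality of an `(m+1)`-coherent family: some family `Ψ` indexed by the
`m`-tuples (for `m = 0`, a single function on `{ξ : ξ < ε}`) has alternating sums
agreeing with `F` up to finitely many points. -/
def TrivI {A : Type*} [AddCommGroup A] {ε : Ordinal} {m : ℕ}
    (F : (t : Tup ε (m + 1)) → Set.Iio (hd t) → A) : Prop :=
  ∃ Ψ : (t : Tup ε m) → Set.Iio (hd t) → A,
    ∀ s : Tup ε (m + 1),
      {ξ : Set.Iio (hd s) |
        (∑ i : Fin (m + 1), (-1 : ℤ) ^ (i : ℕ) •
          Ψ (faceT s i) ⟨ξ.1, lt_of_lt_of_le ξ.2 (hd_le_faceT s i)⟩) - F s ξ ≠ 0}.Finite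

/-!
With `d` the alternating coboundary of families indexed by tuples (so `d ∘ d = 0`), coherence
of `φ` says that `d φ` is almost zero, i.e. finitely supported below the least entry of each
tuple, and triviality says that `φ - d ψ` is almost zero for some `ψ`.

The proof is by induction on the degree. In degree `k + 1`, a family that is coherent on
`δ + 1` is trivialized there by its cone `t ↦ (-1) ^ k φ (t, δ)`. For a height `γ` of cofinality
at most `ℵ_k`, take a fundamental sequence `(f i)_{i < cof γ}` and build by transfinite recursion
trivializations `Ψ i` on `f i + 1` that extend one another. At stage `i` the earlier ones glue to a
trivialization `U` on their supremum `δ`, an ordinal of cofinality less than `ℵ_k`. The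
difference between `U` and the cone `Θ` at `f i` is a coherent family of degree `k` on `δ`, hence
trivial by induction; this lets one correct `Θ`, by a cocycle and an almost-zero term, so that it
agrees with `U` below `δ`. Gluing all the `Ψ i` trivializes the family on `γ`.
-/

open Cardinal Set Function

lemma lt_hd_iff {γ ξ : Ordinal} {k : ℕ} (t : Tup γ k) : ξ < hd t ↔ ξ < γ ∧ ∀ i, ξ < t.1 i := by
  cases k with
  | zero => simp [hd]
  | succ k =>
    exact ⟨fun h => ⟨h.trans (t.2.2 0), fun i => h.trans_le (t.2.1.monotone (Fin.zero_le i))⟩,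
      fun h => h.2 0⟩

lemma Fin.strictMono_snoc {α : Type*} [Preorder α] {n : ℕ} {s : Fin n → α}
    (hs : StrictMono s) {x : α} (hx : ∀ i, s i < x) :
    StrictMono (Fin.snoc s x : Fin (n + 1) → α) := by
  rw [← Fin.insertNth_last', Fin.strictMono_insertNth_iff]
  exact ⟨hs, fun i _ => hx i, fun i h => absurd h (Fin.castSucc_lt_last i).not_ge⟩

lemma Fin.removeNth_castSucc_snoc {α : Type*} {n : ℕ} (i : Fin (n + 1))
    (s : Fin (n + 1) → α) (x : α) :
    i.castSucc.removeNth (Fin.snoc s x : Fin (n + 2) → α) = Fin.snoc (i.removeNth s) x := by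
  funext j
  refine Fin.lastCases ?_ (fun j => ?_) j <;> simp [Fin.removeNth]

lemma finite_setOf_ne_zero_iff {α M : Type*} [Preorder α] [Zero M] {c : α} (f : α → M) :
    {ξ : Iio c | f ξ ≠ 0}.Finite ↔ (Iio c ∩ support f).Finite := by
  rw [← Set.finite_image_iff Subtype.val_injective.injOn]
  congr!
  ext ξ
  simp [and_comm]

theorem WellFoundedLT.exists_seq_of_step {ι X : Type*} [LT ι] [WellFoundedLT ι] [Nonempty X]
    (Q : ι → X → Prop) (R : ι → X → X → Prop)
    (step : ∀ i (x : ι → X), (∀ j < i, Q j (x j) ∧ ∀ l < j, R l (x l) (x j)) →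
      ∃ y, Q i y ∧ ∀ j < i, R j (x j) y) :
    ∃ x : ι → X, ∀ i, Q i (x i) ∧ ∀ j < i, R j (x j) (x i) := by
  classical
  let x : ι → X := wellFounded_lt.fix fun i x =>
    if h : ∃ y, Q i y ∧ ∀ j (hj : j < i), R j (x j hj) y then h.choose
    else Classical.arbitrary X
  refine ⟨x, fun i => ?_⟩
  induction i using WellFoundedLT.induction with | _ i ih
  have h := step i x ih
  rw [show x i = _ from wellFounded_lt.fix_eq _ i, dif_pos h]
  exact h.choose_spec

lemma StrictMono.exists_sup_initialSegment {a : Ordinal} {f : Iio a → Ordinal}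
    (hf : StrictMono f) (i : Iio a) :
    ∃ δ ≤ f i + 1, δ.cof ≤ (i : Ordinal).card ∧ (∀ j < i, f j + 1 ≤ δ) ∧
      ∀ β < δ, ∃ j < i, β < f j + 1 := by
  let g : Iio (i : Ordinal) → Ordinal :=
    fun j => f ⟨j, mem_Iio.2 (lt_trans (mem_Iio.1 j.2) (mem_Iio.1 i.2))⟩
  have hg : StrictMono g := fun j j' h => hf h
  refine ⟨⨆ j, g j + 1, Ordinal.iSup_le_iff.2 fun j => ?_, ?_,
    fun j hj => Ordinal.le_iSup (fun j => g j + 1) ⟨j, hj⟩, fun β hβ => ?_⟩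
  · gcongr
    exact (hf (Subtype.mk_lt_mk.2 j.2)).le
  · rw [Ordinal.cof_iSup_Iio_add_one hg]
    exact Ordinal.cof_le_card _
  · obtain ⟨j, hj⟩ := Ordinal.lt_iSup_iff.1 hβ
    exact ⟨_, j.2, hj⟩

/-- A family `(φ_t)` indexed by `k`-tuples, extended to all tuples and all points so that changing
the height costs nothing; only the values at increasing tuples `t` and points `ξ < hd t` matter. -/
abbrev Cochain (A : Type*) (k : ℕ) : Type _ := (Fin k → Ordinal.{0}) → Ordinal.{0} → A

namespace Cochain

variable {A : Type*} {k : ℕ}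

def EqBelow (δ : Ordinal) (φ ψ : Cochain A k) : Prop :=
  ∀ t ξ, (∀ i, t i < δ) → ξ < δ → φ t ξ = ψ t ξ

lemma EqBelow.trans {δ : Ordinal} {φ ψ χ : Cochain A k} (h₁ : EqBelow δ φ ψ)
    (h₂ : EqBelow δ ψ χ) : EqBelow δ φ χ :=
  fun t ξ ht hξ => (h₁ t ξ ht hξ).trans (h₂ t ξ ht hξ)

lemma EqBelow.mono {δ δ' : Ordinal} {φ ψ : Cochain A k} (h : EqBelow δ φ ψ) (hδ : δ' ≤ δ) :
    EqBelow δ' φ ψ :=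
  fun t ξ ht hξ => h t ξ (fun i => (ht i).trans_le hδ) (hξ.trans_le hδ)

variable [AddCommGroup A]

def coboundary : Cochain A k →+ Cochain A (k + 1) where
  toFun φ s ξ := ∑ i : Fin (k + 1), (-1 : ℤ) ^ (i : ℕ) • φ (i.removeNth s) ξ
  map_zero' := by ext; simp
  map_add' φ ψ := by ext; simp [smul_add, Finset.sum_add_distrib]

lemma coboundary_apply (φ : Cochain A k) (s : Fin (k + 1) → Ordinal) (ξ : Ordinal) :
    coboundary φ s ξ = ∑ i : Fin (k + 1), (-1 : ℤ) ^ (i : ℕ) • φ (i.removeNth s) ξ := rfl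

theorem coboundary_coboundary (φ : Cochain A k) : coboundary (coboundary φ) = 0 := by
  ext s ξ
  simp only [coboundary_apply, Finset.smul_sum, smul_smul, Pi.zero_apply]
  rw [← Finset.sum_product', Finset.univ_product_univ]
  refine Finset.sum_ninvolution (fun p => (p.1.succAbove p.2, p.2.predAbove p.1)) ?_ ?_ ?_ ?_
  · rintro ⟨j, i⟩
    dsimp only
    rw [Fin.removeNth_removeNth_eq_swap, ← pow_add, ← pow_add,
      Fin.neg_one_pow_succAbove_add_predAbove, ← add_smul, add_comm, neg_add_cancel, zero_smul]
  · rintro ⟨j, i⟩ - h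
    exact Fin.succAbove_ne j i (congrArg Prod.fst h)
  · simp
  · rintro ⟨j, i⟩
    simp [Fin.succAbove_succAbove_predAbove, Fin.predAbove_predAbove_succAbove]

lemma EqBelow.sub_right {δ : Ordinal} {φ ψ : Cochain A k} (h : EqBelow δ φ ψ)
    (χ : Cochain A k) : EqBelow δ (φ - χ) (ψ - χ) :=
  fun t ξ ht hξ => congrArg (· - χ t ξ) (h t ξ ht hξ)

lemma EqBelow.coboundary {δ : Ordinal} {φ ψ : Cochain A k} (h : EqBelow δ φ ψ) :
    EqBelow δ (coboundary φ) (coboundary ψ) := fun s ξ hs hξ => by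
  simp only [coboundary_apply]
  exact Finset.sum_congr rfl fun i _ => congrArg _ (h (i.removeNth s) ξ (fun _ => hs _) hξ)

def almostZero (γ : Ordinal) (k : ℕ) : AddSubgroup (Cochain A k) where
  carrier := {φ | ∀ t : Tup γ k, (Iio (hd t) ∩ support (φ t.1)).Finite}
  zero_mem' t := by simp
  add_mem' hφ hψ t := ((hφ t).union (hψ t)).subset fun _ ⟨hξ, hne⟩ =>
    (support_add _ _ hne).imp (⟨hξ, ·⟩) (⟨hξ, ·⟩)
  neg_mem' hφ t := by simpa using hφ t

def IsCoherent (γ : Ordinal) (φ : Cochain A k) : Prop := coboundary φ ∈ almostZero γ (k + 1)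

def IsTrivialization (γ : Ordinal) (φ : Cochain A (k + 1)) (ψ : Cochain A k) : Prop :=
  coboundary ψ - φ ∈ almostZero γ (k + 1)

def IsTrivial (γ : Ordinal) : {k : ℕ} → Cochain A k → Prop
  | 0, φ => φ ∈ almostZero γ 0
  | _ + 1, φ => ∃ ψ, IsTrivialization γ φ ψ

lemma almostZero_mono {δ γ : Ordinal} (h : δ ≤ γ) : almostZero (A := A) γ k ≤ almostZero δ k :=
  fun _ hφ t => (hφ ⟨t.1, t.2.1, fun i => (t.2.2 i).trans_le h⟩).subset fun _ ⟨hξ, hne⟩ =>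
    ⟨(lt_hd_iff _).2 ⟨((lt_hd_iff t).1 hξ).1.trans_le h, ((lt_hd_iff t).1 hξ).2⟩, hne⟩

lemma IsCoherent.mono {δ γ : Ordinal} {φ : Cochain A k} (hφ : IsCoherent γ φ) (h : δ ≤ γ) :
    IsCoherent δ φ :=
  almostZero_mono h hφ

lemma mem_almostZero_of_cover {γ : Ordinal} {φ : Cochain A (k + 1)}
    (h : ∀ β < γ, ∃ δ, β < δ ∧ φ ∈ almostZero δ (k + 1)) : φ ∈ almostZero γ (k + 1) := by
  intro s
  obtain ⟨δ, hδ, hφ⟩ := h _ (s.2.2 (Fin.last k))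
  exact hφ ⟨s.1, s.2.1, fun i => (s.2.1.monotone (Fin.le_last i)).trans_lt hδ⟩

lemma EqBelow.mem_almostZero {δ : Ordinal} {φ ψ : Cochain A k} (h : EqBelow δ φ ψ)
    (hφ : φ ∈ almostZero δ k) : ψ ∈ almostZero δ k :=
  fun t => (hφ t).subset fun ξ ⟨hξ, hne⟩ =>
    ⟨hξ, fun h0 => hne ((h t.1 ξ t.2.2 ((lt_hd_iff t).1 hξ).1).symm.trans h0)⟩

lemma comp_removeNth_mem_almostZero {γ : Ordinal} {φ : Cochain A k} (hφ : φ ∈ almostZero γ k)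
    (i : Fin (k + 1)) : (fun s => φ (i.removeNth s)) ∈ almostZero γ (k + 1) := fun s =>
  (hφ (faceT s i)).subset fun _ ⟨hξ, hne⟩ => ⟨(hd_le_faceT s i).trans_lt' hξ, hne⟩

lemma coboundary_mem_almostZero {γ : Ordinal} {φ : Cochain A k} (hφ : φ ∈ almostZero γ k) :
    coboundary φ ∈ almostZero γ (k + 1) := by
  have : coboundary φ = ∑ i : Fin (k + 1), (-1 : ℤ) ^ (i : ℕ) • fun s => φ (i.removeNth s) := by
    ext s ξ
    simp [coboundary_apply, Finset.sum_apply]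
  rw [this]
  exact sum_mem fun i _ => zsmul_mem (comp_removeNth_mem_almostZero hφ i) _

lemma IsTrivial.exists_cocycle {γ : Ordinal} {φ : Cochain A k} (h : IsTrivial γ φ) :
    ∃ C, coboundary C = 0 ∧ C - φ ∈ almostZero γ k := by
  cases k with
  | zero => exact ⟨0, map_zero _, by simpa using neg_mem h⟩
  | succ k =>
    obtain ⟨ψ, hψ⟩ := h
    exact ⟨coboundary ψ, coboundary_coboundary ψ, hψ⟩

def truncate (δ : Ordinal) (φ : Cochain A k) : Cochain A k := fun t ξ =>
  if (∀ i, t i < δ) ∧ ξ < δ then φ t ξ else 0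

lemma eqBelow_truncate (δ : Ordinal) (φ : Cochain A k) : EqBelow δ φ (truncate δ φ) :=
  fun _ _ ht hξ => (if_pos ⟨ht, hξ⟩).symm

lemma truncate_mem_almostZero {δ γ : Ordinal} {φ : Cochain A k} (hφ : φ ∈ almostZero δ k) :
    truncate δ φ ∈ almostZero γ k := by
  intro t
  by_cases ht : ∀ i, t.1 i < δ
  · refine (hφ ⟨t.1, t.2.1, ht⟩).subset fun ξ ⟨hξ, hne⟩ => ?_
    have hδ : ξ < δ := by
      by_contra h
      exact hne (if_neg fun h' => h h'.2)
    exact ⟨(lt_hd_iff _).2 ⟨hδ, ((lt_hd_iff t).1 hξ).2⟩,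
      fun h0 => hne ((if_pos ⟨ht, hδ⟩).trans h0)⟩
  · exact Set.finite_empty.subset fun ξ ⟨_, hne⟩ => hne (if_neg fun h => ht h.1)

def cone (δ : Ordinal) (φ : Cochain A (k + 1)) : Cochain A k := fun t ξ =>
  if ∀ i, t i < δ then (-1 : ℤ) ^ k • φ (Fin.snoc t δ) ξ else 0

lemma coboundary_cone_apply {δ : Ordinal} (φ : Cochain A (k + 1)) {s : Fin (k + 1) → Ordinal}
    (hs : ∀ i, s i < δ) (ξ : Ordinal) :
    coboundary (cone δ φ) s ξ = (-1 : ℤ) ^ k • coboundary φ (Fin.snoc s δ) ξ + φ s ξ := by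
  simp only [coboundary_apply, cone, Fin.sum_univ_castSucc (n := k + 1),
    Fin.removeNth_castSucc_snoc, Fin.removeNth_last, Fin.init_snoc]
  have hsign : (-1 : ℤ) ^ k * (-1) ^ (k + 1) = -1 := by
    rw [pow_succ, ← mul_assoc, ← pow_add, Even.neg_one_pow ⟨k, rfl⟩, one_mul]
  rw [smul_add, Finset.smul_sum, smul_smul, Fin.val_last, hsign, neg_one_smul,
    neg_add_cancel_right]
  refine Finset.sum_congr rfl fun i _ => ?_
  rw [if_pos, smul_smul, smul_smul, Fin.val_castSucc, mul_comm]
  exact fun _ => hs _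

lemma coboundary_cone_apply_of_last_eq {δ : Ordinal} (φ : Cochain A (k + 1))
    {s : Fin (k + 1) → Ordinal} (hs : StrictMono s) (hlast : s (Fin.last k) = δ) (ξ : Ordinal) :
    coboundary (cone δ φ) s ξ = φ s ξ := by
  rw [coboundary_apply, Fin.sum_univ_castSucc, Finset.sum_eq_zero, zero_add]
  · have hinit : ∀ j, (Fin.last k).removeNth s j < δ := fun j => by
      simpa [Fin.removeNth_last, Fin.init, hlast] using hs (Fin.castSucc_lt_last j)
    have hsnoc : Fin.snoc ((Fin.last k).removeNth s) δ = s := by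
      rw [Fin.removeNth_last, ← hlast, Fin.snoc_init_self]
    rw [cone, if_pos hinit, hsnoc, smul_smul, Fin.val_last, ← pow_add,
      Even.neg_one_pow ⟨k, rfl⟩, one_smul]
  · intro j _
    obtain ⟨l, hl⟩ := Fin.exists_succAbove_eq (Fin.castSucc_lt_last j).ne'
    have : ¬ ∀ i, j.castSucc.removeNth s i < δ :=
      fun h => (h l).ne (by rw [Fin.removeNth, hl, hlast])
    rw [cone, if_neg this, smul_zero]

theorem isTrivialization_cone {δ : Ordinal} {φ : Cochain A (k + 1)}
    (hφ : IsCoherent (δ + 1) φ) : IsTrivialization (δ + 1) φ (cone δ φ) := by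
  intro s
  rcases (Order.lt_add_one_iff.1 (s.2.2 (Fin.last k))).lt_or_eq with hlt | hlast
  · have hs : ∀ i, s.1 i < δ := fun i => (s.2.1.monotone (Fin.le_last i)).trans_lt hlt
    let s' : Tup (δ + 1) (k + 2) := ⟨Fin.snoc s.1 δ, Fin.strictMono_snoc s.2.1 hs,
      Fin.lastCases (by simp) fun i => by simpa using (hs i).trans (lt_add_one δ)⟩
    have hd_eq : hd s' = hd s :=
      Fin.snoc_castSucc (α := fun _ => Ordinal) (i := 0) (p := s.1) (x := δ)
    refine (hφ s').subset fun ξ ⟨hξ, hne⟩ => ⟨hd_eq ▸ hξ, fun h0 => hne ?_⟩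
    rw [Pi.sub_apply, Pi.sub_apply, coboundary_cone_apply φ hs, h0, smul_zero, zero_add,
      sub_self]
  · refine Set.finite_empty.subset fun ξ ⟨_, hne⟩ => hne ?_
    rw [Pi.sub_apply, Pi.sub_apply, coboundary_cone_apply_of_last_eq φ s.2.1 hlast, sub_self]

theorem exists_isTrivialization_extending {δ' δ : Ordinal} (hδ : δ' ≤ δ)
    (IH : ∀ χ : Cochain A k, IsCoherent δ' χ → IsTrivial δ' χ) {φ : Cochain A (k + 1)}
    {Θ U : Cochain A k} (hΘ : IsTrivialization δ φ Θ) (hU : IsTrivialization δ' φ U) :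
    ∃ Ψ, IsTrivialization δ φ Ψ ∧ EqBelow δ' U Ψ := by
  have hcoh : IsCoherent δ' (Θ - U) := by
    have : coboundary (Θ - U) = (coboundary Θ - φ) - (coboundary U - φ) := by
      rw [map_sub]; abel
    rw [IsCoherent, this]
    exact sub_mem (almostZero_mono hδ hΘ) hU
  obtain ⟨C, hC, hCΘ⟩ := (IH _ hcoh).exists_cocycle
  have hcorr : U - Θ + C ∈ almostZero δ' k := by
    convert hCΘ using 1; abel
  refine ⟨Θ - C + truncate δ' (U - Θ + C), ?_, fun t ξ ht hξ => ?_⟩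
  · have : coboundary (Θ - C + truncate δ' (U - Θ + C)) - φ
        = (coboundary Θ - φ) + coboundary (truncate δ' (U - Θ + C)) := by
      rw [map_add, map_sub, hC]; abel
    rw [IsTrivialization, this]
    exact add_mem hΘ (coboundary_mem_almostZero (truncate_mem_almostZero hcorr))
  · simp only [Pi.add_apply]
    rw [← eqBelow_truncate δ' _ t ξ ht hξ]
    simp

/-- The least admissible index is taken so that, below `e i`, only the `Ψ j` with `j ≤ i`
matter. -/
def glue {ι : Type*} [LT ι] [WellFoundedLT ι] (e : ι → Ordinal) (Ψ : ι → Cochain A k) :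
    Cochain A k := fun t ξ =>
  open Classical in
  if h : ∃ i, (∀ l, t l < e i) ∧ ξ < e i then
    Ψ (wellFounded_lt.min {i | (∀ l, t l < e i) ∧ ξ < e i} h) t ξ
  else 0

section glue

variable {ι : Type*} [LinearOrder ι] [WellFoundedLT ι] {e : ι → Ordinal} {Ψ : ι → Cochain A k}

lemma eqBelow_glue {i : ι} (hΨ : ∀ j < i, EqBelow (e j) (Ψ j) (Ψ i)) :
    EqBelow (e i) (Ψ i) (glue e Ψ) := by
  intro t ξ ht hξ
  have h : ∃ i, (∀ l, t l < e i) ∧ ξ < e i := ⟨i, ht, hξ⟩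
  have hmin := wellFounded_lt.min_mem _ h
  rw [glue, dif_pos h]
  rcases (wellFounded_lt.min_le (s := {i | (∀ l, t l < e i) ∧ ξ < e i}) ⟨ht, hξ⟩).lt_or_eq
    with hlt | heq
  · exact (hΨ _ hlt t ξ hmin.1 hmin.2).symm
  · rw [heq]

lemma isTrivialization_glue {γ : Ordinal} {φ : Cochain A (k + 1)}
    (h : ∀ β < γ, ∃ i, β < e i ∧ IsTrivialization (e i) φ (Ψ i) ∧
      ∀ j < i, EqBelow (e j) (Ψ j) (Ψ i)) :
    IsTrivialization γ φ (glue e Ψ) :=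
  mem_almostZero_of_cover fun β hβ =>
    let ⟨i, hβi, hi, hΨ⟩ := h β hβ
    ⟨e i, hβi, ((eqBelow_glue hΨ).coboundary.sub_right φ).mem_almostZero hi⟩

end glue

theorem isTrivial_of_filtration {ι : Type*} [LinearOrder ι] [WellFoundedLT ι] {γ : Ordinal}
    {φ : Cochain A (k + 1)} (e : ι → Ordinal)
    (IH : ∀ δ : Ordinal, δ.cof < ℵ_ k → ∀ χ : Cochain A k, IsCoherent δ χ → IsTrivial δ χ)
    (hloc : ∀ i, IsTrivial (e i) φ)
    (hstage : ∀ i, ∃ δ ≤ e i, δ.cof < ℵ_ k ∧ (∀ j < i, e j ≤ δ) ∧ ∀ β < δ, ∃ j < i, β < e j)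
    (hcover : ∀ β < γ, ∃ i, β < e i) :
    IsTrivial γ φ := by
  obtain ⟨Ψ, hΨ⟩ := WellFoundedLT.exists_seq_of_step
    (fun i Ψ => IsTrivialization (e i) φ Ψ) (fun j Ψ Ψ' => EqBelow (e j) Ψ Ψ')
    fun i Ψ hΨ => by
      obtain ⟨δ, hδ, hcof, hle, hcov⟩ := hstage i
      obtain ⟨Θ, hΘ⟩ := hloc i
      have hU : IsTrivialization δ φ (glue e Ψ) := isTrivialization_glue fun β hβ =>
        let ⟨j, hj, hβj⟩ := hcov β hβ
        ⟨j, hβj, hΨ j hj⟩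
      obtain ⟨Ψi, hΨi, hagree⟩ := exists_isTrivialization_extending hδ (IH δ hcof) hΘ hU
      exact ⟨Ψi, hΨi, fun j hj => (eqBelow_glue (hΨ j hj).2).trans (hagree.mono (hle j hj))⟩
  exact ⟨glue e Ψ, isTrivialization_glue fun β hβ =>
    let ⟨i, hβi⟩ := hcover β hβ
    ⟨i, hβi, hΨ i⟩⟩

theorem isTrivial_of_cof_le {γ : Ordinal} (hγ : γ.cof ≤ ℵ_ k)
    (IH : ∀ δ : Ordinal, δ.cof < ℵ_ k → ∀ χ : Cochain A k, IsCoherent δ χ → IsTrivial δ χ)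
    {φ : Cochain A (k + 1)} (hφ : IsCoherent γ φ) : IsTrivial γ φ := by
  obtain ⟨f, hf⟩ := Ordinal.exists_isFundamentalSeq (o := γ) rfl
  have hmono : StrictMono fun i => (f i : Ordinal) :=
    (Subtype.strictMono_coe _).comp hf.strictMono
  refine isTrivial_of_filtration (fun i => (f i : Ordinal) + 1) IH
    (fun i => ⟨_, isTrivialization_cone (hφ.mono (Order.add_one_le_of_lt (f i).2))⟩)
    (fun i => ?_) (fun β hβ => ?_)
  · obtain ⟨δ, hδ, hcof, hle, hcov⟩ := hmono.exists_sup_initialSegment i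
    exact ⟨δ, hδ, hcof.trans_lt ((Cardinal.lt_ord.1 i.2).trans_le hγ), hle, hcov⟩
  · obtain ⟨_, ⟨i, rfl⟩, hi⟩ := hf.isCofinal_range ⟨β, hβ⟩
    exact ⟨i, Order.lt_add_one_iff.2 hi⟩

theorem isTrivial_of_cof_lt_aleph0 {γ : Ordinal} (hγ : γ.cof < ℵ₀) {φ : Cochain A 0}
    (hφ : IsCoherent γ φ) : IsTrivial γ φ := by
  intro t
  rcases Ordinal.zero_or_succ_or_isSuccLimit γ with rfl | ⟨δ, rfl⟩ | hl
  · simp [hd]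
  · have h := hφ ⟨![δ], by simp, by simp⟩
    refine (h.union (Set.finite_singleton δ)).subset fun ξ ⟨hξ, hne⟩ => ?_
    rcases (Order.lt_succ_iff.1 (show ξ < Order.succ δ from hξ)).lt_or_eq with hlt | rfl
    · refine Or.inl ⟨hlt, ?_⟩
      simpa [coboundary_apply, Subsingleton.elim (Fin.removeNth 0 ![δ]) t.1] using hne
    · exact Or.inr rfl
  · exact absurd (Ordinal.cof_lt_aleph0_iff.1 hγ) (Ordinal.one_lt_cof_iff.2 hl).not_ge

theorem isTrivial_of_isCoherent :
    ∀ (k : ℕ) (γ : Ordinal), γ.cof < ℵ_ k → ∀ φ : Cochain A k, IsCoherent γ φ → IsTrivial γ φ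
  | 0, _, hγ, _, hφ => isTrivial_of_cof_lt_aleph0 (by simpa using hγ) hφ
  | k + 1, _, hγ, _, hφ => by
    rw [Nat.cast_succ, ← Cardinal.succ_aleph, Order.lt_succ_iff] at hγ
    exact isTrivial_of_cof_le hγ (isTrivial_of_isCoherent k) hφ

def ofTup {ε : Ordinal} (F : (t : Tup ε k) → Iio (hd t) → A) : Cochain A k := fun t ξ =>
  if h : StrictMono t ∧ ∀ i, t i < ε then
    if hξ : ξ < hd (⟨t, h⟩ : Tup ε k) then F ⟨t, h⟩ ⟨ξ, hξ⟩ else 0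
  else 0

lemma ofTup_apply {ε : Ordinal} (F : (t : Tup ε k) → Iio (hd t) → A) (t : Tup ε k)
    (ξ : Iio (hd t)) : ofTup F t.1 ξ = F t ξ := by
  rw [ofTup, dif_pos t.2, dif_pos (by exact ξ.2)]
  rfl

lemma isCoherent_ofTup {ε : Ordinal} {F : (t : Tup ε (k + 1)) → Iio (hd t) → A}
    (hF : CohI F) : IsCoherent ε (ofTup F) := fun s => by
  rw [← finite_setOf_ne_zero_iff]
  convert hF s using 4 with ξ
  rw [coboundary_apply]
  exact Finset.sum_congr rfl fun (i : Fin (k + 2)) _ => congrArg ((-1 : ℤ) ^ (i : ℕ) • ·)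
    (ofTup_apply F (faceT s i) ⟨ξ, ξ.2.trans_le (hd_le_faceT s i)⟩)

lemma trivI_of_isTrivial {ε : Ordinal} {F : (t : Tup ε (k + 1)) → Iio (hd t) → A}
    (h : IsTrivial ε (ofTup F)) : TrivI F := by
  obtain ⟨ψ, hψ⟩ := h
  refine ⟨fun t ξ => ψ t.1 ξ, fun s => ?_⟩
  convert (finite_setOf_ne_zero_iff _).2 (hψ s) using 4 with ξ
  rw [Pi.sub_apply, Pi.sub_apply, ofTup_apply]
  rfl

end Cochain

/-- For every abelian group `A`, every positive integer `n = m + 1`, and every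
ordinal `ε` of cofinality less than `ℵ_n`, every `A`-valued `n`-coherent family of
height `ε` is `n`-trivial. -/
theorem stmt16 (A : Type*) [AddCommGroup A] (m : ℕ) (ε : Ordinal)
    (hcof : ε.cof < Cardinal.aleph (m + 1))
    (F : (t : Tup ε (m + 1)) → Set.Iio (hd t) → A) (hF : CohI F) : TrivI F := by
  have hε : ε.cof < ℵ_ ((m + 1 : ℕ) : Ordinal) := by rwa [Nat.cast_succ]
  exact Cochain.trivI_of_isTrivial
    (Cochain.isTrivial_of_isCoherent _ ε hε _ (Cochain.isCoherent_ofTup hF))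
end
end
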